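/- Fix an integer d ≥ 3. Define cn_n(d) by the identity in ℝ[[X]]: Σ_{n≥0} (n!)^{d−2}·X^n = exp(Σ_{n≥1} cn_n(d) X^n/n!), and define imp_k(d−2) by Σ_{k≥1} imp_k(d−2) X^k = 1 − (Σ_{n≥0} (n!)^{d−2}·X^n)^{−1}. Then for every integer r ≥ 0, as n → ∞, cn_n(d)/(n!)^{d−1} = 1 − Σ_{k=1}^{r} imp_k(d−2)/((n)_k)^{d−2} + O(1/n^{(r+1)(d−2)}), where (n)_k = n(n−1)⋯(n−k+1). Equivalently, the number cn_n(d) of d-constellations of size n satisfies cn_n(d) = (n!)^{d−1}·(1 − Σ_{k=1}^{r} imp_k(d−2)/((n)_k)^{d−2} + O(n^{−(r+1)(d−2)})). -/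

import Mathlib

open Filter Asymptotics Finset

/-- A real sequence `u` is *gargantuan* if `u (n-1) / u n → 0` and, for every `r ≥ 1`,
`∑_{k=r}^{n-r} |u k * u (n-k)| = O(u (n-r))` as `n → ∞`. -/
def Gargantuan (u : ℕ → ℝ) : Prop :=
  Tendsto (fun n => u (n - 1) / u n) atTop (nhds 0) ∧
    ∀ r : ℕ, 1 ≤ r →
      (fun n => ∑ k ∈ Finset.Icc r (n - r), |u k * u (n - k)|) =O[atTop]
        fun n => u (n - r)

/-- The exponential `exp C` of a formal power series `C` (intended for `C` with zero
constant term): the coefficient of `X^n` is `∑_{k=0}^{n} [X^n] (C^k) / k!`. -/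
noncomputable def expPS (C : PowerSeries ℝ) : PowerSeries ℝ :=
  PowerSeries.mk fun n =>
    ∑ k ∈ Finset.range (n + 1), (PowerSeries.coeff n (C ^ k)) / (Nat.factorial k)

/-!
Write `u n = (n!)^(d-2)`, `U = ∑ u n Xⁿ` and `V = U⁻¹ = 1 - ∑ imp k Xᵏ`. Since `U = exp L` with
`L = ∑ cn n Xⁿ / n!`, we have `U' = L' U`, i.e. `X L' = (X U') V`. The sequence `u` is
gargantuan: a convolution `∑ₖ a k b (n - k)` of two `O(u)` sequences is, up to `O(u (n - r - 1))`,
the sum of its `r + 1` terms at either end. Applied to `U V = 1`, with the far-end factors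
`[X^(n-j)] V` expanded recursively, this gives `[X^n] V = -∑_{k ≤ r} [X^k] V² u (n - k)` up to
`O(u (n - r - 1))`. Applied to `X L' = (X U') V`, the end terms cancel because `V' = -U' V²`,
leaving `[X^n] L = ∑_{k ≤ r} [X^k] V u (n - k) + O(u (n - r - 1))`. Dividing by `u n`, with
`u (n - k) / u n = 1 / (n)_k^(d-2)` and `u (n - r - 1) / u n = O(n^(-(r+1)(d-2)))`, gives the claim.
-/

open PowerSeries
open scoped Nat

theorem PowerSeries.coeff_pow_eq_zero_of_lt {R : Type*} [CommSemiring R] {L : R⟦X⟧}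
    (hL : constantCoeff L = 0) {m k : ℕ} (h : m < k) : coeff m (L ^ k) = 0 :=
  X_pow_dvd_iff.mp (pow_dvd_pow_of_dvd (X_dvd_iff.mpr hL) k) m h

theorem PowerSeries.coeff_mul_eq_sum_range {R : Type*} [Semiring R] (f g : R⟦X⟧) (n : ℕ) :
    coeff n (f * g) = ∑ j ∈ range (n + 1), coeff j f * coeff (n - j) g := by
  rw [coeff_mul, Finset.Nat.sum_antidiagonal_eq_sum_range_succ fun i j => coeff i f * coeff j g]

theorem PowerSeries.coeff_mul_congr_right {R : Type*} [Semiring R] {f g : R⟦X⟧} (h : R⟦X⟧)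
    {n : ℕ} (hfg : ∀ m ≤ n, coeff m f = coeff m g) : coeff n (h * f) = coeff n (h * g) := by
  simp only [coeff_mul_eq_sum_range]
  exact sum_congr rfl fun j _ => by rw [hfg _ (Nat.sub_le n j)]

theorem PowerSeries.coeff_X_mul_derivative {R : Type*} [CommSemiring R] (f : R⟦X⟧) (n : ℕ) :
    coeff n (X * d⁄dX R f) = n * coeff n f := by
  cases n with
  | zero => simp
  | succ n => rw [coeff_succ_X_mul, coeff_derivative, mul_comm]; push_cast; rfl

noncomputable def expPartialSum (L : ℝ⟦X⟧) (N : ℕ) : ℝ⟦X⟧ :=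
  ∑ k ∈ range (N + 1), (k ! : ℝ)⁻¹ • L ^ k

theorem coeff_expPS_eq_coeff_expPartialSum {L : ℝ⟦X⟧} (hL : constantCoeff L = 0) {m N : ℕ}
    (h : m ≤ N) : coeff m (expPS L) = coeff m (expPartialSum L N) := by
  simp only [expPS, expPartialSum, coeff_mk, map_sum, coeff_smul, smul_eq_mul, div_eq_inv_mul]
  refine sum_subset (range_subset_range.mpr (by omega)) fun k _ hk => ?_
  rw [coeff_pow_eq_zero_of_lt hL (by simpa using hk), mul_zero]

theorem derivative_expPartialSum_succ (L : ℝ⟦X⟧) (N : ℕ) :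
    d⁄dX ℝ (expPartialSum L (N + 1)) = d⁄dX ℝ L * expPartialSum L N := by
  rw [expPartialSum, map_sum, sum_range_succ', expPartialSum, mul_sum]
  simp only [Derivation.map_smul, Derivation.leibniz_pow, pow_zero, Derivation.map_one_eq_zero,
    smul_zero, add_zero]
  refine sum_congr rfl fun k _ => ?_
  rw [Nat.add_sub_cancel, ← Nat.cast_smul_eq_nsmul ℝ, smul_smul, smul_eq_mul, mul_comm (L ^ k),
    ← mul_smul_comm]
  congr 1
  rw [Nat.factorial_succ]
  push_cast
  field_simp

theorem derivative_expPS {L : ℝ⟦X⟧} (hL : constantCoeff L = 0) :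
    d⁄dX ℝ (expPS L) = d⁄dX ℝ L * expPS L := by
  ext n
  rw [coeff_derivative, coeff_expPS_eq_coeff_expPartialSum hL le_rfl, ← coeff_derivative,
    derivative_expPartialSum_succ]
  exact coeff_mul_congr_right _ fun m hm => (coeff_expPS_eq_coeff_expPartialSum hL hm).symm

theorem sum_range_eq_head_add_middle_add_tail {M : Type*} [AddCommMonoid M] (f : ℕ → M)
    {r n : ℕ} (h : 2 * (r + 1) ≤ n) :
    ∑ k ∈ range (n + 1), f k =
      ∑ k ∈ range (r + 1), f k + ∑ k ∈ Icc (r + 1) (n - (r + 1)), f k +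
        ∑ k ∈ range (r + 1), f (n - k) := by
  have hmid : Icc (r + 1) (n - (r + 1)) = Ico (r + 1) (n - r) := by
    ext k; simp only [mem_Icc, mem_Ico]; omega
  have htail : ∑ k ∈ Ico (n - r) (n + 1), f k = ∑ k ∈ range (r + 1), f (n - k) := by
    rw [sum_Ico_eq_sum_range, ← sum_range_reflect]
    refine sum_congr (by congr 1; omega) fun k hk => congrArg f ?_
    simp only [mem_range] at hk
    omega
  rw [hmid, ← htail, sum_range_add_sum_Ico _ (by omega : r + 1 ≤ n - r),
    sum_range_add_sum_Ico _ (by omega : n - r ≤ n + 1)]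

def HasExpansion (u : ℕ → ℝ) (A P : ℝ⟦X⟧) (r : ℕ) : Prop :=
  (fun n => coeff n A - ∑ k ∈ range (r + 1), coeff k P * u (n - k)) =O[atTop]
    fun n => u (n - (r + 1))

section Gargantuan

variable {u : ℕ → ℝ}

theorem Gargantuan.isBigO_sum_middle (hu : Gargantuan u) (r : ℕ) {f : ℕ → ℕ → ℝ} {C : ℝ}
    (hf : ∀ n, ∀ k ∈ Icc (r + 1) (n - (r + 1)), |f n k| ≤ C * |u k * u (n - k)|) :
    (fun n => ∑ k ∈ Icc (r + 1) (n - (r + 1)), f n k) =O[atTop] fun n => u (n - (r + 1)) := by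
  refine (IsBigO.of_bound C (Eventually.of_forall fun n => ?_)).trans (hu.2 (r + 1) (by omega))
  rw [Real.norm_eq_abs, Real.norm_of_nonneg (sum_nonneg fun _ _ => abs_nonneg _), mul_sum]
  exact (abs_sum_le_sum_abs _ _).trans (sum_le_sum (hf n))

theorem Gargantuan.eventually_sum_le_half (hu : Gargantuan u) (hpos : ∀ n, 0 < u n) :
    ∀ᶠ n in atTop, ∑ k ∈ Icc 1 (n - 1), |u k * u (n - k)| ≤ u n / 2 := by
  have hshift : (fun n => u (n - 1)) =o[atTop] u :=
    (isLittleO_iff_tendsto fun n hn => absurd hn (hpos n).ne').mpr hu.1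
  filter_upwards [((hu.2 1 le_rfl).trans_isLittleO hshift).bound (by norm_num : (0 : ℝ) < 1 / 2)]
    with n hn
  rwa [Real.norm_eq_abs, Real.norm_eq_abs, abs_of_nonneg (sum_nonneg fun _ _ => abs_nonneg _),
    abs_of_pos (hpos n), one_div_mul_eq_div] at hn

theorem isBigO_sum_head_of_hasExpansion {V W : ℝ⟦X⟧} {r : ℕ}
    (hV : ∀ j ∈ Icc 1 r, HasExpansion u V W (r - j)) (C : ℝ⟦X⟧) (hC : constantCoeff C = 0) :
    (fun n => ∑ j ∈ range (r + 1), coeff j C * coeff (n - j) V -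
        ∑ t ∈ range (r + 1), coeff t (C * W) * u (n - t)) =O[atTop] fun n => u (n - (r + 1)) := by
  have hconv : ∀ n, ∑ t ∈ range (r + 1), coeff t (C * W) * u (n - t) =
      ∑ j ∈ range (r + 1), coeff j C * ∑ i ∈ range (r - j + 1), coeff i W * u (n - j - i) := by
    intro n
    simp only [coeff_mul_eq_sum_range, sum_mul, mul_sum, mul_assoc]
    have hflip := sum_range_diag_flip (r + 1) fun j i => coeff j C * (coeff i W * u (n - j - i))
    refine Eq.trans (sum_congr rfl fun t _ => sum_congr rfl fun j hj => ?_)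
      (hflip.trans (sum_congr rfl fun j hj => by rw [Nat.sub_add_comm (by simpa using hj)]))
    simp only [mem_range] at hj
    rw [Nat.sub_sub, Nat.add_sub_cancel' (by omega)]
  simp only [hconv, ← sum_sub_distrib, ← mul_sub]
  refine IsBigO.fun_sum fun j hj => ?_
  rcases Nat.eq_zero_or_pos j with rfl | hj0
  · simpa [hC] using isBigO_zero _ _
  have hjr : j ≤ r := Nat.lt_succ_iff.mp (mem_range.mp hj)
  refine (((hV j (mem_Icc.mpr ⟨hj0, hjr⟩)).comp_tendsto (tendsto_sub_atTop_nat j)).const_mul_left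
    (coeff j C)).congr (fun n => ?_) fun n => ?_
  · simp only [Function.comp_apply, Nat.sub_sub]
  · simp only [Function.comp_apply]
    congr 1
    omega

theorem Gargantuan.exists_abs_coeff_inv_le (hu : Gargantuan u) (hpos : ∀ n, 0 < u n)
    (hu0 : u 0 = 1) : ∃ C, ∀ n, |coeff n (mk u)⁻¹| ≤ C * u n := by
  have hv0 : coeff 0 (mk u)⁻¹ = 1 := by simp [hu0]
  have hrec : ∀ n, 2 ≤ n → coeff n (mk u)⁻¹ =
      -u n - ∑ k ∈ Icc 1 (n - 1), u k * coeff (n - k) (mk u)⁻¹ := by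
    intro n hn
    have h := coeff_mul_eq_sum_range (mk u) (mk u)⁻¹ n
    rw [PowerSeries.mul_inv_cancel _ (by simp [hu0]), coeff_one, if_neg (by omega),
      sum_range_eq_head_add_middle_add_tail _ (by omega : 2 * (0 + 1) ≤ n)] at h
    simp only [zero_add, sum_range_one, coeff_mk, hu0, Nat.sub_zero, Nat.sub_self, hv0] at h
    linarith
  obtain ⟨N, hN⟩ := eventually_atTop.mp (hu.eventually_sum_le_half hpos)
  have hratio : ∀ m, 0 ≤ |coeff m (mk u)⁻¹| / u m := fun m => div_nonneg (abs_nonneg _) (hpos m).le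
  set C := 2 + ∑ m ∈ range (N + 2), |coeff m (mk u)⁻¹| / u m
  have hC2 : 2 ≤ C := le_add_of_nonneg_right (sum_nonneg fun m _ => hratio m)
  refine ⟨C, fun n => ?_⟩
  induction n using Nat.strong_induction_on with
  | _ n ih =>
  by_cases hn : n < N + 2
  · have hle : |coeff n (mk u)⁻¹| / u n ≤ C :=
      (single_le_sum (fun m _ => hratio m) (mem_range.mpr hn)).trans
        (le_add_of_nonneg_left zero_le_two)
    rwa [div_le_iff₀ (hpos n)] at hle
  replace hn := not_lt.mp hn
  have hsum : ∑ k ∈ Icc 1 (n - 1), |u k * coeff (n - k) (mk u)⁻¹| ≤ C * (u n / 2) := by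
    refine (sum_le_sum fun k hk => ?_).trans_eq (mul_sum _ _ _).symm |>.trans
      (mul_le_mul_of_nonneg_left (hN n (by omega)) (by linarith))
    rw [mem_Icc] at hk
    rw [abs_mul, abs_mul, abs_of_pos (hpos k), abs_of_pos (hpos (n - k)), mul_left_comm]
    exact mul_le_mul_of_nonneg_left (ih (n - k) (by omega)) (hpos k).le
  rw [hrec n (by omega)]
  calc |-u n - ∑ k ∈ Icc 1 (n - 1), u k * coeff (n - k) (mk u)⁻¹|
      ≤ u n + ∑ k ∈ Icc 1 (n - 1), |u k * coeff (n - k) (mk u)⁻¹| := by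
        refine (abs_sub _ _).trans (add_le_add (by rw [abs_neg, abs_of_pos (hpos n)])
          (abs_sum_le_sum_abs _ _))
    _ ≤ C * u n := by nlinarith [hpos n]

theorem Gargantuan.hasExpansion_inv (hu : Gargantuan u) (hpos : ∀ n, 0 < u n) (hu0 : u 0 = 1)
    (r : ℕ) : HasExpansion u (mk u)⁻¹ (-(mk u)⁻¹ ^ 2) r := by
  induction r using Nat.strong_induction_on with
  | _ r ih =>
  set V := (mk u)⁻¹
  set W := -V ^ 2
  obtain ⟨C, hC⟩ := hu.exists_abs_coeff_inv_le hpos hu0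
  have hhead := isBigO_sum_head_of_hasExpansion
    (fun j hj => ih (r - j) (by rw [mem_Icc] at hj; omega)) (mk u - 1) (by simp [hu0])
  have hmid := hu.isBigO_sum_middle r (f := fun n k => u k * coeff (n - k) V) (C := C)
    fun n k _ => by
      rw [abs_mul, abs_mul, abs_of_pos (hpos (n - k)), mul_left_comm]
      exact mul_le_mul_of_nonneg_left (hC _) (abs_nonneg _)
  refine (hhead.neg_left.sub hmid).congr' ?_ EventuallyEq.rfl
  filter_upwards [eventually_ge_atTop (2 * (r + 1))] with n hn
  have h := coeff_mul_eq_sum_range (mk u) V n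
  rw [PowerSeries.mul_inv_cancel _ (by simp [hu0]), coeff_one, if_neg (by omega),
    sum_range_eq_head_add_middle_add_tail _ hn] at h
  have hcoeff : ∀ t, coeff t ((mk u - 1) * W) + coeff t W + coeff t V = 0 := fun t => by
    rw [← map_add, ← map_add, show (mk u - 1) * W + W + V = V - mk u * V * V by ring,
      PowerSeries.mul_inv_cancel _ (by simp [hu0]), one_mul, sub_self, map_zero]
  have hsum : ∑ t ∈ range (r + 1), coeff t ((mk u - 1) * W) * u (n - t) +
      ∑ t ∈ range (r + 1), coeff t W * u (n - t) + ∑ t ∈ range (r + 1), coeff t V * u (n - t)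
        = 0 := by
    simp only [← sum_add_distrib, ← add_mul, hcoeff, zero_mul, sum_const_zero]
  have hhead0 : ∑ j ∈ range (r + 1), coeff j (mk u) * coeff (n - j) V =
      ∑ j ∈ range (r + 1), coeff j (mk u - 1) * coeff (n - j) V + coeff n V := by
    simp [map_sub, sub_mul, sum_sub_distrib, coeff_one]
  have htail : ∑ k ∈ range (r + 1), coeff (n - k) (mk u) * coeff (n - (n - k)) V =
      ∑ k ∈ range (r + 1), coeff k V * u (n - k) :=
    sum_congr rfl fun k hk => by
      rw [mem_range] at hk
      rw [Nat.sub_sub_self (by omega), coeff_mk, mul_comm]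
  simp only [coeff_mk] at h hhead0 htail ⊢
  linear_combination h + hhead0 + htail + hsum

theorem Gargantuan.hasExpansion_of_derivative_eq (hu : Gargantuan u) (hpos : ∀ n, 0 < u n)
    (hu0 : u 0 = 1) {L : ℝ⟦X⟧} (hL : d⁄dX ℝ (mk u) = d⁄dX ℝ L * mk u) (r : ℕ) :
    HasExpansion u L (mk u)⁻¹ r := by
  set V := (mk u)⁻¹
  set D := X * d⁄dX ℝ (mk u)
  obtain ⟨C, hC⟩ := hu.exists_abs_coeff_inv_le hpos hu0
  have hhead := isBigO_sum_head_of_hasExpansion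
    (fun j _ => hu.hasExpansion_inv hpos hu0 (r - j)) D (by simp [D])
  have hmid := hu.isBigO_sum_middle r (f := fun n k => k / n * u k * coeff (n - k) V) (C := C)
    fun n k hk => by
      rw [mem_Icc] at hk
      have hkn : |(k : ℝ) / n| ≤ 1 := by
        rw [abs_of_nonneg (by positivity)]
        exact div_le_one_of_le₀ (by exact_mod_cast (by omega : k ≤ n)) (Nat.cast_nonneg n)
      rw [abs_mul, abs_mul, abs_mul, abs_of_pos (hpos (n - k))]
      calc |(k : ℝ) / n| * |u k| * |coeff (n - k) V| ≤ 1 * |u k| * (C * u (n - k)) := by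
            gcongr
            exact hC _
        _ = C * (|u k| * u (n - k)) := by ring
  have hinv : (fun n : ℕ => (n : ℝ)⁻¹) =O[atTop] fun _ => (1 : ℝ) :=
    (tendsto_inv_atTop_zero.comp tendsto_natCast_atTop_atTop).isBigO_one ℝ
  refine (((hinv.mul hhead).congr_right fun n => one_mul _).add hmid).congr' ?_ EventuallyEq.rfl
  filter_upwards [eventually_ge_atTop (2 * (r + 1))] with n hn
  have hn0 : (n : ℝ) ≠ 0 := by exact_mod_cast (by omega : n ≠ 0)
  have hXL : X * d⁄dX ℝ L = D * V := by
    rw [mul_assoc, hL, mul_assoc, PowerSeries.mul_inv_cancel _ (by simp [hu0]), mul_one]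
  have hDW : D * -V ^ 2 = X * d⁄dX ℝ V := by
    rw [derivative_inv']
    ring
  have h := congrArg (coeff n) hXL
  rw [coeff_X_mul_derivative, coeff_mul_eq_sum_range,
    sum_range_eq_head_add_middle_add_tail _ hn] at h
  have hmid' : ∑ k ∈ Icc (r + 1) (n - (r + 1)), coeff k D * coeff (n - k) V =
      n * ∑ k ∈ Icc (r + 1) (n - (r + 1)), k / n * u k * coeff (n - k) V := by
    rw [mul_sum]
    refine sum_congr rfl fun k _ => ?_
    rw [coeff_X_mul_derivative, coeff_mk]
    field_simp
  have htail : ∑ k ∈ range (r + 1), coeff (n - k) D * coeff (n - (n - k)) V =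
      n * ∑ k ∈ range (r + 1), coeff k V * u (n - k) -
        ∑ t ∈ range (r + 1), coeff t (D * -V ^ 2) * u (n - t) := by
    rw [hDW, mul_sum, ← sum_sub_distrib]
    refine sum_congr rfl fun k hk => ?_
    rw [mem_range] at hk
    rw [coeff_X_mul_derivative, coeff_X_mul_derivative, coeff_mk, Nat.sub_sub_self (by omega),
      Nat.cast_sub (by omega)]
    ring
  rw [hmid', htail] at h
  rw [← inv_mul_cancel_left₀ hn0 (∑ k ∈ Icc (r + 1) (n - (r + 1)), _), ← mul_add,
    inv_mul_eq_iff_eq_mul₀ hn0]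
  linear_combination -h

end Gargantuan

theorem Nat.factorial_add_mul_factorial_le {a b : ℕ} (h : a ≤ b) (m : ℕ) :
    (a + m)! * b ! ≤ a ! * (b + m)! := by
  rw [← Nat.factorial_mul_ascFactorial a m, ← Nat.factorial_mul_ascFactorial b m]
  calc a ! * (a + 1).ascFactorial m * b ! = a ! * b ! * (a + 1).ascFactorial m := by ring
    _ ≤ a ! * b ! * (b + 1).ascFactorial m :=
        Nat.mul_le_mul_left _ (Nat.ascFactorial_le m (by omega))
    _ = a ! * (b ! * (b + 1).ascFactorial m) := by ring

theorem Nat.factorial_mul_factorial_sub_le {a k n : ℕ} (hak : a ≤ k) (hkn : k + a ≤ n) :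
    k ! * (n - k)! ≤ a ! * (n - a)! := by
  have h := Nat.factorial_add_mul_factorial_le (a := a) (b := n - k) (by omega) (k - a)
  rwa [Nat.add_sub_cancel' hak, show n - k + (k - a) = n - a by omega] at h

theorem Nat.sum_Icc_factorial_mul_pow_le {e r n : ℕ} (he : e ≠ 0) (hn : 2 * r + 2 ≤ n) :
    ∑ k ∈ Icc r (n - r), (k ! * (n - k)!) ^ e ≤
      (2 * r ! ^ e + 2 * (r + 1)! ^ e) * (n - r)! ^ e := by
  have hsplit : Icc r (n - r) = insert r (insert (n - r) (Icc (r + 1) (n - (r + 1)))) := by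
    ext k; simp only [mem_Icc, mem_insert]; omega
  have hmid : ∑ k ∈ Icc (r + 1) (n - (r + 1)), (k ! * (n - k)!) ^ e ≤
      2 * (r + 1)! ^ e * (n - r)! ^ e := by
    have hterm : ∀ k ∈ Icc (r + 1) (n - (r + 1)),
        (k ! * (n - k)!) ^ e ≤ (r + 1)! ^ e * (n - (r + 1))! ^ e := fun k hk => by
      rw [mem_Icc] at hk
      rw [← Nat.mul_pow]
      exact Nat.pow_le_pow_left (Nat.factorial_mul_factorial_sub_le hk.1 (by omega)) e
    have hcard : #(Icc (r + 1) (n - (r + 1))) ≤ n := by simp; omega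
    have hshift : n * (n - (r + 1))! ^ e ≤ 2 * (n - r)! ^ e := by
      rw [show n - r = n - (r + 1) + 1 by omega, Nat.factorial_succ, Nat.mul_pow, ← mul_assoc]
      refine Nat.mul_le_mul_right _ ?_
      calc n ≤ 2 * (n - (r + 1) + 1) := by omega
        _ ≤ 2 * (n - (r + 1) + 1) ^ e := Nat.mul_le_mul_left _ (Nat.le_self_pow he _)
    calc ∑ k ∈ Icc (r + 1) (n - (r + 1)), (k ! * (n - k)!) ^ e
        ≤ #(Icc (r + 1) (n - (r + 1))) * ((r + 1)! ^ e * (n - (r + 1))! ^ e) :=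
          sum_le_card_nsmul _ _ _ hterm
      _ ≤ n * ((r + 1)! ^ e * (n - (r + 1))! ^ e) := Nat.mul_le_mul_right _ hcard
      _ = (r + 1)! ^ e * (n * (n - (r + 1))! ^ e) := by ring
      _ ≤ (r + 1)! ^ e * (2 * (n - r)! ^ e) := Nat.mul_le_mul_left _ hshift
      _ = 2 * (r + 1)! ^ e * (n - r)! ^ e := by ring
  rw [hsplit, sum_insert (by simp only [mem_insert, mem_Icc]; omega),
    sum_insert (by simp only [mem_Icc]; omega), Nat.sub_sub_self (by omega),
    mul_comm (n - r)! r !, Nat.mul_pow]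
  linarith [hmid]

theorem gargantuan_factorial_pow {e : ℕ} (he : e ≠ 0) : Gargantuan fun n => (n ! : ℝ) ^ e := by
  refine ⟨?_, fun r _ => ?_⟩
  · refine (tendsto_inv_atTop_zero.comp ((tendsto_pow_atTop he).comp
      tendsto_natCast_atTop_atTop)).congr' ?_
    filter_upwards [eventually_ge_atTop 1] with n hn
    obtain ⟨m, rfl⟩ := Nat.exists_eq_add_of_le' hn
    simp only [Function.comp_apply, Nat.add_sub_cancel, Nat.factorial_succ, Nat.cast_mul, mul_pow]
    field_simp
  · refine IsBigO.of_bound (2 * (r ! : ℝ) ^ e + 2 * ((r + 1)! : ℝ) ^ e) ?_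
    filter_upwards [eventually_ge_atTop (2 * r + 2)] with n hn
    have h := Nat.sum_Icc_factorial_mul_pow_le he hn
    rw [Real.norm_of_nonneg (sum_nonneg fun _ _ => abs_nonneg _),
      Real.norm_of_nonneg (by positivity)]
    simp only [abs_mul, abs_pow, Nat.abs_cast, ← mul_pow]
    exact_mod_cast h

theorem Nat.pow_le_two_pow_mul_descFactorial {n k : ℕ} (h : 2 * k ≤ n) :
    n ^ k ≤ 2 ^ k * n.descFactorial k :=
  calc n ^ k ≤ (2 * (n + 1 - k)) ^ k := Nat.pow_le_pow_left (by omega) k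
    _ = 2 ^ k * (n + 1 - k) ^ k := Nat.mul_pow _ _ _
    _ ≤ 2 ^ k * n.descFactorial k := Nat.mul_le_mul_left _ (Nat.pow_sub_le_descFactorial n k)

theorem factorial_sub_pow_div_factorial_pow {e k n : ℕ} (h : k ≤ n) :
    ((n - k)! : ℝ) ^ e / (n ! : ℝ) ^ e = ((n.descFactorial k : ℝ) ^ e)⁻¹ := by
  rw [← Nat.factorial_mul_descFactorial h, Nat.cast_mul, mul_pow,
    div_mul_cancel_left₀ (by positivity)]

theorem isBigO_factorial_sub_pow_div_factorial_pow (e k : ℕ) :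
    (fun n => ((n - k)! : ℝ) ^ e / (n ! : ℝ) ^ e) =O[atTop] fun n => 1 / (n : ℝ) ^ (k * e) := by
  refine IsBigO.of_bound (2 ^ (k * e)) ?_
  filter_upwards [eventually_ge_atTop (2 * k), eventually_ge_atTop 1] with n hn hn1
  have hD : (n : ℝ) ^ k ≤ 2 ^ k * n.descFactorial k := by
    exact_mod_cast Nat.pow_le_two_pow_mul_descFactorial hn
  have hdpos : (0 : ℝ) < n.descFactorial k := by
    exact_mod_cast Nat.descFactorial_pos.mpr (by omega)
  rw [factorial_sub_pow_div_factorial_pow (by omega), Real.norm_of_nonneg (by positivity),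
    Real.norm_of_nonneg (by positivity), pow_mul, pow_mul, ← div_eq_mul_one_div, ← div_pow,
    ← inv_pow]
  gcongr
  rw [inv_le_comm₀ hdpos (by positivity), inv_div, div_le_iff₀ (by positivity), mul_comm]
  exact hD

theorem sum_div_descFactorial_pow_eq {e r n : ℕ} (hrn : r ≤ n) (a : ℕ → ℝ) :
    ∑ k ∈ Icc 1 r, a k / (n.descFactorial k : ℝ) ^ e =
      (∑ k ∈ Icc 1 r, a k * ((n - k)! : ℝ) ^ e) / (n ! : ℝ) ^ e := by
  rw [sum_div]
  refine sum_congr rfl fun k hk => ?_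
  rw [mem_Icc] at hk
  rw [mul_div_assoc, factorial_sub_pow_div_factorial_pow (by omega), div_eq_mul_inv]

theorem sum_range_coeff_inv_mul_eq {u imp : ℕ → ℝ} (hu0 : u 0 = 1)
    (himp : mk imp = 1 - (mk u)⁻¹) (r n : ℕ) :
    ∑ k ∈ range (r + 1), coeff k (mk u)⁻¹ * u (n - k) = u n - ∑ k ∈ Icc 1 r, imp k * u (n - k) := by
  have hcoeff : ∀ k ∈ Icc 1 r, coeff k (mk u)⁻¹ * u (n - k) = -(imp k * u (n - k)) :=
    fun k hk => by
      have h := congrArg (coeff k) himp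
      rw [mem_Icc] at hk
      simp only [coeff_mk, map_sub, coeff_one, if_neg (by omega : k ≠ 0)] at h
      rw [h]
      ring
  rw [sum_range_eq_add_Ico _ (by omega), Ico_add_one_right_eq_Icc, sum_congr rfl hcoeff,
    sum_neg_distrib]
  simp [hu0, sub_eq_add_neg]

theorem constellations_asymptotics_general
    (d : ℕ) (hd : 3 ≤ d)
    (cn imp : ℕ → ℝ) (hcn0 : cn 0 = 0)
    (hexp : (PowerSeries.mk fun n => ((Nat.factorial n : ℝ)) ^ (d - 2)) =
      expPS (PowerSeries.mk fun n => cn n / (Nat.factorial n)))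
    (himp : (PowerSeries.mk fun k => imp k) =
      1 - (PowerSeries.mk fun n => ((Nat.factorial n : ℝ)) ^ (d - 2))⁻¹) :
    ∀ r : ℕ,
      ((fun n => cn n / ((Nat.factorial n : ℝ)) ^ (d - 1) -
          (1 - ∑ k ∈ Finset.Icc 1 r, imp k / ((n.descFactorial k : ℝ)) ^ (d - 2)))
        =O[atTop] fun n => 1 / (n : ℝ) ^ ((r + 1) * (d - 2))) ∧
      ((fun n => cn n - ((Nat.factorial n : ℝ)) ^ (d - 1) *
          (1 - ∑ k ∈ Finset.Icc 1 r, imp k / ((n.descFactorial k : ℝ)) ^ (d - 2)))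
        =O[atTop] fun n =>
          ((Nat.factorial n : ℝ)) ^ (d - 1) / (n : ℝ) ^ ((r + 1) * (d - 2))) := by
  intro r
  set u : ℕ → ℝ := fun n => (n ! : ℝ) ^ (d - 2)
  have hpos : ∀ n, 0 < u n := fun n => by positivity
  have hu0 : u 0 = 1 := by simp [u]
  have hL0 : constantCoeff (mk fun n => cn n / n !) = 0 := by simp [hcn0]
  have hexpansion := (gargantuan_factorial_pow (by omega : d - 2 ≠ 0)).hasExpansion_of_derivative_eq
    hpos hu0 (by rw [hexp]; exact derivative_expPS hL0) r
  have hkey : ∀ᶠ n in atTop,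
      (coeff n (mk fun n => cn n / n !) - ∑ k ∈ range (r + 1), coeff k (mk u)⁻¹ * u (n - k)) *
          (u n)⁻¹ =
        cn n / (n ! : ℝ) ^ (d - 1) -
          (1 - ∑ k ∈ Icc 1 r, imp k / (n.descFactorial k : ℝ) ^ (d - 2)) := by
    filter_upwards [eventually_ge_atTop r] with n hn
    rw [sum_range_coeff_inv_mul_eq hu0 himp, sum_div_descFactorial_pow_eq hn, coeff_mk,
      show d - 1 = d - 2 + 1 by omega, pow_succ']
    field_simp [(hpos n).ne']
    ring
  have h1 := (((hexpansion.mul (isBigO_refl (fun n => (u n)⁻¹) atTop)).congr_right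
    fun n => (div_eq_mul_inv _ _).symm).trans
      (isBigO_factorial_sub_pow_div_factorial_pow (d - 2) (r + 1))).congr' hkey EventuallyEq.rfl
  refine ⟨h1, ((isBigO_refl (fun n => (n ! : ℝ) ^ (d - 1)) atTop).mul h1).congr (fun n => ?_)
    fun n => mul_one_div _ _⟩
  field_simp

/-- asymptotics for the number of `d`-constellations of size `n`. -/
theorem constellations_asymptotics
    (d : ℕ) (hd : 3 ≤ d)
    (cn imp : ℕ → ℝ) (hcn0 : cn 0 = 0) (himp0 : imp 0 = 0)
    (hexp : (PowerSeries.mk fun n => ((Nat.factorial n : ℝ)) ^ (d - 2)) =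
      expPS (PowerSeries.mk fun n => cn n / (Nat.factorial n)))
    (himp : (PowerSeries.mk fun k => imp k) =
      1 - (PowerSeries.mk fun n => ((Nat.factorial n : ℝ)) ^ (d - 2))⁻¹) :
    ∀ r : ℕ,
      ((fun n => cn n / ((Nat.factorial n : ℝ)) ^ (d - 1) -
          (1 - ∑ k ∈ Finset.Icc 1 r, imp k / ((n.descFactorial k : ℝ)) ^ (d - 2)))
        =O[atTop] fun n => 1 / (n : ℝ) ^ ((r + 1) * (d - 2))) ∧
      ((fun n => cn n - ((Nat.factorial n : ℝ)) ^ (d - 1) *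
          (1 - ∑ k ∈ Finset.Icc 1 r, imp k / ((n.descFactorial k : ℝ)) ^ (d - 2)))
        =O[atTop] fun n =>
          ((Nat.factorial n : ℝ)) ^ (d - 1) / (n : ℝ) ^ ((r + 1) * (d - 2))) :=
  constellations_asymptotics_general d hd cn imp hcn0 hexp himp
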